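/- Vanishing effect of the perturbation on the free energy: In the general perturbed Bayesian inference model, if s_n → 0 as n → ∞, then |F_n − F_n^{(pert)}(a)| → 0 uniformly in a ∈ [1/2, 3], and consequently |F_n − ∫₁² F_n^{(pert)}(a) da| → 0. -/

import Mathlib

open MeasureTheory ProbabilityTheory Filter Real
open scoped Topology

noncomputable section

/-- Standard Gaussian measure on `ℝ`. -/
def stdG : Measure ℝ := gaussianReal 0 1

/-- Law of a vector of `n` i.i.d. standard Gaussians. -/
def gvec (n : ℕ) : Measure (Fin n → ℝ) := Measure.pi fun _ => stdG

/-- Rescaled scalar product `x·y = (1/n)·Σᵢ xᵢyᵢ`. -/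
def ovl (n : ℕ) (x y : Fin n → ℝ) : ℝ := (1 / (n : ℝ)) * ∑ i, x i * y i

/-- Perturbation Hamiltonian
`h_{n,a}(x) = Σᵢ a√sₙ·zᵢ·xᵢ + a²sₙ·xᵢ·Xᵢ − a²sₙ·xᵢ²/2`. -/
def hPert (n : ℕ) (sn a : ℝ) (X z x : Fin n → ℝ) : ℝ :=
  ∑ i : Fin n,
    (a * Real.sqrt sn * z i * x i + a ^ 2 * sn * x i * X i - a ^ 2 * sn * x i ^ 2 / 2)

/-- Joint law of `((X,Y),z)` where `z` is an independent Gaussian vector. -/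
def pertSpace {𝒴 : Type*} [MeasurableSpace 𝒴] (n : ℕ)
    (ν : Measure ((Fin n → ℝ) × 𝒴)) [IsProbabilityMeasure ν] :
    Measure (((Fin n → ℝ) × 𝒴) × (Fin n → ℝ)) :=
  ν.prod (gvec n)

/-- Perturbed partition function
`∫ W(x,Y)·e^{h_{n,a}(x)} dP₁(x)` (where `W(x,y) = e^{H_n(x,y)}`). -/
def Zpert {𝒴 : Type*} [MeasurableSpace 𝒴] (n : ℕ) (P : Measure (Fin n → ℝ))
    (W : (Fin n → ℝ) → 𝒴 → ℝ) (sn a : ℝ)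
    (ω : ((Fin n → ℝ) × 𝒴) × (Fin n → ℝ)) : ℝ :=
  ∫ x, W x ω.1.2 * Real.exp (hPert n sn a ω.1.1 ω.2 x) ∂P

/-- Unperturbed free energy `F_n = (1/n)·E[log Z_n(Y)]`. -/
def FEgen {𝒴 : Type*} [MeasurableSpace 𝒴] (n : ℕ) (P : Measure (Fin n → ℝ))
    (W : (Fin n → ℝ) → 𝒴 → ℝ) (ν : Measure ((Fin n → ℝ) × 𝒴)) : ℝ :=
  (1 / (n : ℝ)) * ∫ y, Real.log (∫ x, W x y ∂P) ∂(ν.map Prod.snd)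

/-- Perturbed free energy `F_n^{(pert)}(a)`. -/
def FEpert {𝒴 : Type*} [MeasurableSpace 𝒴] (n : ℕ) (P : Measure (Fin n → ℝ))
    (W : (Fin n → ℝ) → 𝒴 → ℝ) (ν : Measure ((Fin n → ℝ) × 𝒴)) [IsProbabilityMeasure ν]
    (sn a : ℝ) : ℝ :=
  (1 / (n : ℝ)) * ∫ ω, Real.log (Zpert n P W sn a ω) ∂(pertSpace n ν)

/-- Perturbed Gibbs expectation `⟨f(x)⟩`. -/
def gibbsPert {𝒴 : Type*} [MeasurableSpace 𝒴] (n : ℕ) (P : Measure (Fin n → ℝ))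
    (W : (Fin n → ℝ) → 𝒴 → ℝ) (sn a : ℝ)
    (ω : ((Fin n → ℝ) × 𝒴) × (Fin n → ℝ)) (f : (Fin n → ℝ) → ℝ) : ℝ :=
  (∫ x, f x * (W x ω.1.2 * Real.exp (hPert n sn a ω.1.1 ω.2 x)) ∂P)
    / Zpert n P W sn a ω

/-- The function `φ(a) = (1/(n·sₙ))·log ∫ e^{H^{(pert)}} dP₁`. -/
def phiPert {𝒴 : Type*} [MeasurableSpace 𝒴] (n : ℕ) (P : Measure (Fin n → ℝ))
    (W : (Fin n → ℝ) → 𝒴 → ℝ) (sn a : ℝ)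
    (ω : ((Fin n → ℝ) × 𝒴) × (Fin n → ℝ)) : ℝ :=
  (1 / ((n : ℝ) * sn)) * Real.log (Zpert n P W sn a ω)

/-- `v_n(s_n) = sup_{1/2 ≤ a ≤ 3} E|φ(a) − E φ(a)|`. -/
def vnPert {𝒴 : Type*} [MeasurableSpace 𝒴] (n : ℕ) (P : Measure (Fin n → ℝ))
    (W : (Fin n → ℝ) → 𝒴 → ℝ) (ν : Measure ((Fin n → ℝ) × 𝒴)) [IsProbabilityMeasure ν]
    (sn : ℝ) : ℝ :=
  ⨆ a : Set.Icc (1 / 2 : ℝ) 3,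
    ∫ ω, |phiPert n P W sn a ω - ∫ ω', phiPert n P W sn a ω' ∂(pertSpace n ν)|
      ∂(pertSpace n ν)

/-- `E⟨x⁽¹⁾·x⁽²⁾⟩` under the perturbed Gibbs measure. -/
def meanOv {𝒴 : Type*} [MeasurableSpace 𝒴] (n : ℕ) (P : Measure (Fin n → ℝ))
    (W : (Fin n → ℝ) → 𝒴 → ℝ) (ν : Measure ((Fin n → ℝ) × 𝒴)) [IsProbabilityMeasure ν]
    (sn a : ℝ) : ℝ :=
  ∫ ω, gibbsPert n P W sn a ω
      (fun x1 => gibbsPert n P W sn a ω (fun x2 => ovl n x1 x2)) ∂(pertSpace n ν)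

/-
On the support of `P₁` the perturbation is bounded pointwise:
`|h_{n,a}(x)| ≤ A √sₙ K₁ Σᵢ |zᵢ| + (3/2) n A² sₙ K₁²` whenever `|a| ≤ A`. Multiplying the
Gibbs weight by `e^{h}` therefore moves the log-partition function by at most this amount, and
after taking expectations and dividing by `n` the free energies differ by
`O(√sₙ + sₙ)`, uniformly in `a`. Averaging over `a ∈ [1, 2]` gives the second claim.
-/

instance : IsProbabilityMeasure stdG := by unfold stdG; infer_instance

instance (n : ℕ) : IsProbabilityMeasure (gvec n) := by unfold gvec; infer_instance

instance {𝒴 : Type*} [MeasurableSpace 𝒴] (n : ℕ) (ν : Measure ((Fin n → ℝ) × 𝒴))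
    [IsProbabilityMeasure ν] : IsProbabilityMeasure (pertSpace n ν) := by
  unfold pertSpace; infer_instance

lemma integrable_abs_stdG : Integrable (fun t : ℝ => |t|) stdG :=
  ((memLp_id_gaussianReal 1).integrable le_rfl).abs

lemma integrable_abs_eval_gvec {n : ℕ} (i : Fin n) :
    Integrable (fun z : Fin n → ℝ => |z i|) (gvec n) :=
  integrable_comp_eval integrable_abs_stdG

lemma integrable_sum_abs_gvec (n : ℕ) :
    Integrable (fun z : Fin n → ℝ => ∑ i, |z i|) (gvec n) :=
  integrable_finsetSum _ fun i _ => integrable_abs_eval_gvec i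

lemma integral_sum_abs_gvec (n : ℕ) :
    ∫ z, ∑ i, |z i| ∂(gvec n) = n * ∫ t, |t| ∂stdG := by
  have hcoord (i : Fin n) : ∫ z, |z i| ∂(gvec n) = ∫ t, |t| ∂stdG :=
    integral_comp_eval continuous_abs.aestronglyMeasurable
  simp [integral_finsetSum _ fun i _ => integrable_abs_eval_gvec i, hcoord]

def pertBound (n : ℕ) (sn A K : ℝ) (z : Fin n → ℝ) : ℝ :=
  A * √sn * K * ∑ i, |z i| + n * (3 / 2 * A ^ 2 * sn * K ^ 2)

lemma integrable_pertBound (n : ℕ) (sn A K : ℝ) : Integrable (pertBound n sn A K) (gvec n) :=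
  ((integrable_sum_abs_gvec n).const_mul _).add (integrable_const _)

lemma integral_pertBound (n : ℕ) (sn A K : ℝ) :
    ∫ z, pertBound n sn A K z ∂(gvec n)
      = n * (A * K * (∫ t, |t| ∂stdG) * √sn + 3 / 2 * A ^ 2 * K ^ 2 * sn) := by
  unfold pertBound
  rw [integral_add ((integrable_sum_abs_gvec n).const_mul _) (integrable_const _),
    integral_const_mul, integral_sum_abs_gvec, integral_const, probReal_univ, one_smul]
  ring

lemma abs_hPert_le {n : ℕ} {sn a A K : ℝ} (hsn : 0 ≤ sn) (ha : |a| ≤ A)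
    {X z x : Fin n → ℝ} (hX : ∀ i, |X i| ≤ K) (hx : ∀ i, |x i| ≤ K) :
    |hPert n sn a X z x| ≤ pertBound n sn A K z := by
  have ha2 : a ^ 2 ≤ A ^ 2 := sq_le_sq' (abs_le.mp ha).1 (abs_le.mp ha).2
  have hterm : ∀ i, |a * √sn * z i * x i + a ^ 2 * sn * x i * X i - a ^ 2 * sn * x i ^ 2 / 2|
      ≤ A * √sn * K * |z i| + 3 / 2 * A ^ 2 * sn * K ^ 2 := by
    intro i
    have hK : 0 ≤ K := (abs_nonneg _).trans (hx i)
    have hxX : |x i * X i| ≤ K ^ 2 := by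
      rw [abs_mul, sq]; exact mul_le_mul (hx i) (hX i) (abs_nonneg _) hK
    have hxx : x i ^ 2 ≤ K ^ 2 := sq_le_sq' (abs_le.mp (hx i)).1 (abs_le.mp (hx i)).2
    have h1 : |a * √sn * z i * x i| ≤ A * √sn * K * |z i| := by
      have hax : |a| * |x i| ≤ A * K :=
        mul_le_mul ha (hx i) (abs_nonneg _) ((abs_nonneg _).trans ha)
      calc |a * √sn * z i * x i| = |a| * |x i| * (√sn * |z i|) := by
            simp only [abs_mul, abs_of_nonneg (sqrt_nonneg sn)]; ring
        _ ≤ A * K * (√sn * |z i|) := mul_le_mul_of_nonneg_right hax (by positivity)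
        _ = A * √sn * K * |z i| := by ring
    have h2 : |a ^ 2 * sn * x i * X i| ≤ A ^ 2 * sn * K ^ 2 := by
      rw [mul_assoc, abs_mul, abs_of_nonneg (by positivity)]
      gcongr
    have h3 : |a ^ 2 * sn * x i ^ 2 / 2| ≤ A ^ 2 * sn * K ^ 2 / 2 := by
      rw [abs_of_nonneg (by positivity)]
      gcongr
    calc _ ≤ |a * √sn * z i * x i| + |a ^ 2 * sn * x i * X i| + |a ^ 2 * sn * x i ^ 2 / 2| :=
          (abs_sub _ _).trans (add_le_add (abs_add_le _ _) le_rfl)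
      _ ≤ _ := by linarith
  calc |hPert n sn a X z x| ≤ ∑ i, (A * √sn * K * |z i| + 3 / 2 * A ^ 2 * sn * K ^ 2) :=
        (Finset.abs_sum_le_sum_abs _ _).trans (Finset.sum_le_sum fun i _ => hterm i)
    _ = _ := by simp [pertBound, Finset.sum_add_distrib, Finset.mul_sum]

lemma integral_mul_exp_mem_Icc {α : Type*} [MeasurableSpace α] {μ : Measure α}
    {f g : α → ℝ} {B : ℝ} (hf : AEStronglyMeasurable f μ) (hg : AEStronglyMeasurable g μ)
    (hf0 : ∀ᵐ x ∂μ, 0 ≤ f x) (hgB : ∀ᵐ x ∂μ, |g x| ≤ B) :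
    ∫ x, f x * exp (g x) ∂μ ∈ Set.Icc (exp (-B) * ∫ x, f x ∂μ) (exp B * ∫ x, f x ∂μ) := by
  have hfg : AEStronglyMeasurable (fun x => f x * exp (g x)) μ :=
    hf.mul (continuous_exp.comp_aestronglyMeasurable hg)
  have hlower : ∀ᵐ x ∂μ, exp (-B) * f x ≤ f x * exp (g x) := by
    filter_upwards [hf0, hgB] with x hx hgx
    rw [mul_comm]; gcongr; exact neg_le_of_abs_le hgx
  have hupper : ∀ᵐ x ∂μ, f x * exp (g x) ≤ exp B * f x := by
    filter_upwards [hf0, hgB] with x hx hgx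
    rw [mul_comm]; gcongr; exact le_of_abs_le hgx
  by_cases hfi : Integrable f μ
  · have hfgi : Integrable (fun x => f x * exp (g x)) μ := by
      refine (hfi.const_mul (exp B)).mono' hfg ?_
      filter_upwards [hf0, hupper] with x hx hu
      rwa [norm_of_nonneg (mul_nonneg hx (exp_pos _).le)]
    rw [← integral_const_mul, ← integral_const_mul]
    exact ⟨integral_mono_ae (hfi.const_mul _) hfgi hlower,
      integral_mono_ae hfgi (hfi.const_mul _) hupper⟩
  · have hfgi : ¬ Integrable (fun x => f x * exp (g x)) μ := fun hfgi => hfi <| by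
      refine (hfgi.const_mul (exp B)).mono' hf ?_
      filter_upwards [hf0, hlower] with x hx hl
      rw [norm_of_nonneg hx]
      calc f x = exp B * (exp (-B) * f x) := by rw [← mul_assoc, ← exp_add]; simp
        _ ≤ exp B * (f x * exp (g x)) := by gcongr
    simp [integral_undef hfi, integral_undef hfgi]

lemma abs_log_sub_log_le_of_mem_Icc {u v B : ℝ} (hu : 0 ≤ u) (hB : 0 ≤ B)
    (hv : v ∈ Set.Icc (exp (-B) * u) (exp B * u)) : |log v - log u| ≤ B := by
  rcases hu.eq_or_lt with rfl | hu
  · simp only [mul_zero, Set.Icc_self, Set.mem_singleton_iff] at hv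
    simpa [hv] using hB
  have hv0 : 0 < v := lt_of_lt_of_le (by positivity) hv.1
  have hlow := log_le_log (by positivity) hv.1
  have hupp := log_le_log hv0 hv.2
  rw [log_mul (exp_ne_zero _) hu.ne', log_exp] at hlow hupp
  exact abs_sub_le_iff.mpr ⟨by linarith, by linarith⟩

lemma abs_integral_sub_integral_le {α : Type*} [MeasurableSpace α] {μ : Measure α}
    {f g b : α → ℝ} (hf : Integrable f μ) (hg : AEStronglyMeasurable g μ)
    (hb : Integrable b μ) (hgf : ∀ᵐ x ∂μ, |g x - f x| ≤ b x) :
    |∫ x, g x ∂μ - ∫ x, f x ∂μ| ≤ ∫ x, b x ∂μ := by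
  have hgi : Integrable g μ := by
    refine (hf.abs.add hb).mono' hg ?_
    filter_upwards [hgf] with x hx
    have := abs_sub_abs_le_abs_sub (g x) (f x)
    rw [norm_eq_abs]; simp only [Pi.add_apply]; linarith
  rw [← integral_sub hgi hf]
  exact abs_integral_le_integral_abs.trans (integral_mono_ae (hgi.sub hf).abs hb hgf)

lemma abs_sub_intervalIntegral_le {G : ℝ → ℝ} {F ε a b : ℝ} (hab : a ≤ b) (hG : Measurable G)
    (hGF : ∀ t ∈ Set.Icc a b, |F - G t| ≤ ε) :
    |(b - a) * F - ∫ t in a..b, G t| ≤ (b - a) * ε := by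
  have hIoc : ∀ t ∈ Set.uIoc a b, t ∈ Set.Icc a b := fun t ht => by
    rw [Set.uIoc_of_le hab] at ht; exact Set.Ioc_subset_Icc_self ht
  have hGi : IntervalIntegrable G volume a b := by
    refine (intervalIntegrable_const (c := |F| + ε)).mono_fun' hG.aestronglyMeasurable ?_
    refine (ae_restrict_iff' measurableSet_uIoc).mpr (Eventually.of_forall fun t ht => ?_)
    have h := abs_sub_abs_le_abs_sub (G t) F
    rw [abs_sub_comm] at h
    simp only [norm_eq_abs]
    linarith [hGF t (hIoc t ht)]
  have := intervalIntegral.norm_integral_le_of_norm_le_const (C := ε)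
    (f := fun t => F - G t) fun t ht => hGF t (hIoc t ht)
  rwa [intervalIntegral.integral_sub intervalIntegrable_const hGi, intervalIntegral.integral_const,
    smul_eq_mul, norm_eq_abs, abs_of_nonneg (sub_nonneg.mpr hab), mul_comm ε] at this

section FreeEnergy

variable {𝒴 : Type*} [MeasurableSpace 𝒴] {n : ℕ} {P : Measure (Fin n → ℝ)}
  {W : (Fin n → ℝ) → 𝒴 → ℝ} {ν : Measure ((Fin n → ℝ) × 𝒴)}

lemma measurable_Zpert_uncurry [SFinite P]
    (hW : Measurable fun p : (Fin n → ℝ) × 𝒴 => W p.1 p.2) (sn : ℝ) :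
    Measurable fun q : ℝ × (((Fin n → ℝ) × 𝒴) × (Fin n → ℝ)) => Zpert n P W sn q.1 q.2 := by
  have hint : Measurable fun r : (ℝ × (((Fin n → ℝ) × 𝒴) × (Fin n → ℝ))) × (Fin n → ℝ) =>
      W r.2 r.1.2.1.2 * exp (hPert n sn r.1.1 r.1.2.1.1 r.1.2.2 r.2) := by
    refine (hW.comp (measurable_snd.prodMk measurable_fst.snd.fst.snd)).mul
      (measurable_exp.comp ?_)
    unfold hPert; fun_prop
  exact hint.stronglyMeasurable.integral_prod_right'.measurable

lemma measurable_FEpert [SFinite P] [IsProbabilityMeasure ν]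
    (hW : Measurable fun p : (Fin n → ℝ) × 𝒴 => W p.1 p.2) (sn : ℝ) :
    Measurable fun a => FEpert n P W ν sn a :=
  ((measurable_log.comp (measurable_Zpert_uncurry hW sn)).stronglyMeasurable
    |>.integral_prod_right'.measurable).const_mul _

lemma measurable_log_integral [SFinite P]
    (hW : Measurable fun p : (Fin n → ℝ) × 𝒴 => W p.1 p.2) :
    Measurable fun y => log (∫ x, W x y ∂P) :=
  measurable_log.comp <| (hW.comp measurable_swap).stronglyMeasurable
    |>.integral_prod_right'.measurable

lemma FEgen_eq_integral_pertSpace [SFinite P] [IsProbabilityMeasure ν]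
    (hW : Measurable fun p : (Fin n → ℝ) × 𝒴 => W p.1 p.2) :
    FEgen n P W ν = 1 / n * ∫ ω, log (∫ x, W x ω.1.2 ∂P) ∂(pertSpace n ν) := by
  have hprod := integral_fun_fst (μ := ν) (ν := gvec n) fun p => log (∫ x, W x p.2 ∂P)
  rw [probReal_univ, one_smul] at hprod
  exact congrArg (1 / (n : ℝ) * ·) <| (integral_map measurable_snd.aemeasurable
    (measurable_log_integral hW).aestronglyMeasurable).trans hprod.symm

lemma abs_log_Zpert_sub_le (hW : Measurable fun p : (Fin n → ℝ) × 𝒴 => W p.1 p.2)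
    (hW0 : ∀ x y, 0 ≤ W x y) {K sn a A : ℝ} (hK : 0 ≤ K) (hsupp : ∀ᵐ x ∂P, ∀ i, |x i| ≤ K)
    (hsn : 0 ≤ sn) (ha : |a| ≤ A) (ω : ((Fin n → ℝ) × 𝒴) × (Fin n → ℝ))
    (hX : ∀ i, |ω.1.1 i| ≤ K) :
    |log (Zpert n P W sn a ω) - log (∫ x, W x ω.1.2 ∂P)| ≤ pertBound n sn A K ω.2 := by
  have hA : 0 ≤ A := (abs_nonneg a).trans ha
  refine abs_log_sub_log_le_of_mem_Icc (integral_nonneg fun x => hW0 x _)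
    (by unfold pertBound; positivity) ?_
  refine integral_mul_exp_mem_Icc
    (hW.comp (measurable_id.prodMk measurable_const)).aestronglyMeasurable
    (by unfold hPert; fun_prop) (ae_of_all _ fun x => hW0 x _) ?_
  filter_upwards [hsupp] with x hx using abs_hPert_le hsn ha hX hx

lemma abs_FEgen_sub_FEpert_le [SFinite P] [IsProbabilityMeasure ν]
    (hW : Measurable fun p : (Fin n → ℝ) × 𝒴 => W p.1 p.2) (hW0 : ∀ x y, 0 ≤ W x y)
    (hmarg : ν.map Prod.fst = P) {K : ℝ} (hK : 0 ≤ K) (hsupp : ∀ᵐ x ∂P, ∀ i, |x i| ≤ K)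
    (hlogZ : Integrable (fun y => log (∫ x, W x y ∂P)) (ν.map Prod.snd))
    {sn a A : ℝ} (hsn : 0 ≤ sn) (ha : |a| ≤ A) :
    |FEgen n P W ν - FEpert n P W ν sn a|
      ≤ A * K * (∫ t, |t| ∂stdG) * √sn + 3 / 2 * A ^ 2 * K ^ 2 * sn := by
  have hA : 0 ≤ A := (abs_nonneg a).trans ha
  have hM : 0 ≤ ∫ t, |t| ∂stdG := integral_nonneg fun t => abs_nonneg t
  have hlogZν : Integrable (fun p : (Fin n → ℝ) × 𝒴 => log (∫ x, W x p.2 ∂P)) ν :=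
    (integrable_map_measure (measurable_log_integral hW).aestronglyMeasurable
      measurable_snd.aemeasurable).mp hlogZ
  have hsuppν : ∀ᵐ ω ∂(pertSpace n ν), ∀ i, |ω.1.1 i| ≤ K :=
    Measure.quasiMeasurePreserving_fst.ae <|
      ae_of_ae_map measurable_fst.aemeasurable (hmarg ▸ hsupp)
  set C := A * K * (∫ t, |t| ∂stdG) * √sn + 3 / 2 * A ^ 2 * K ^ 2 * sn
  have hdiff : |∫ ω, log (Zpert n P W sn a ω) ∂(pertSpace n ν)
      - ∫ ω, log (∫ x, W x ω.1.2 ∂P) ∂(pertSpace n ν)| ≤ n * C := by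
    have h := abs_integral_sub_integral_le (hlogZν.comp_fst (gvec n))
      (measurable_log.comp ((measurable_Zpert_uncurry hW sn).comp
        (measurable_const.prodMk measurable_id))).aestronglyMeasurable
      ((integrable_pertBound n sn A K).comp_snd ν)
      (by filter_upwards [hsuppν] with ω hω
          using abs_log_Zpert_sub_le hW hW0 hK hsupp hsn ha ω hω)
    rwa [integral_fun_snd, integral_pertBound, probReal_univ, one_smul] at h
  rw [FEgen_eq_integral_pertSpace hW, FEpert, ← mul_sub, abs_mul, abs_sub_comm]
  rcases (Nat.cast_nonneg n : (0 : ℝ) ≤ n).eq_or_lt with hn | hn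
  · simp only [← hn, div_zero, abs_zero, zero_mul]; positivity
  calc |1 / (n : ℝ)| * _ ≤ 1 / n * (n * C) := by
        rw [abs_of_pos (by positivity)]; gcongr
    _ = C := by field_simp

end FreeEnergy

theorem perturbed_free_energy_vanishes_general
    {𝒴 : ℕ → Type*} [∀ n, MeasurableSpace (𝒴 n)]
    (K₁ : ℝ) (hK₁ : 0 < K₁)
    (P₁ : ∀ n, Measure (Fin n → ℝ)) [∀ n, IsProbabilityMeasure (P₁ n)]
    (ν : ∀ n, Measure ((Fin n → ℝ) × 𝒴 n)) [∀ n, IsProbabilityMeasure (ν n)]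
    (W : ∀ n, (Fin n → ℝ) → 𝒴 n → ℝ)
    (hWmeas : ∀ n, Measurable fun p : (Fin n → ℝ) × 𝒴 n => W n p.1 p.2)
    (hWpos : ∀ n x y, 0 ≤ W n x y)
    (hmarg : ∀ n, (ν n).map Prod.fst = P₁ n)
    (hsupp : ∀ n, ∀ᵐ x ∂(P₁ n), ∀ i, |x i| ≤ K₁)
    (hlogZint : ∀ n,
      Integrable (fun y => Real.log (∫ x, W n x y ∂(P₁ n))) ((ν n).map Prod.snd))
    (s : ℕ → ℝ) (hs : ∀ n, s n ∈ Set.Ioc (0 : ℝ) 1)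
    (hs0 : Tendsto s atTop (𝓝 0)) :
    (∀ ε > (0 : ℝ), ∃ N : ℕ, ∀ n ≥ N, ∀ a ∈ Set.Icc (1 / 2 : ℝ) 3,
        |FEgen n (P₁ n) (W n) (ν n) - FEpert n (P₁ n) (W n) (ν n) (s n) a| < ε)
    ∧ Tendsto
        (fun n => |FEgen n (P₁ n) (W n) (ν n)
          - ∫ a in (1 : ℝ)..2, FEpert n (P₁ n) (W n) (ν n) (s n) a|)
        atTop (𝓝 0) := by
  set ε := fun n => 3 * K₁ * (∫ t, |t| ∂stdG) * √(s n) + 3 / 2 * 3 ^ 2 * K₁ ^ 2 * s n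
  have hbound (n : ℕ) (a : ℝ) (ha : a ∈ Set.Icc (1 / 2 : ℝ) 3) :
      |FEgen n (P₁ n) (W n) (ν n) - FEpert n (P₁ n) (W n) (ν n) (s n) a| ≤ ε n :=
    abs_FEgen_sub_FEpert_le (hWmeas n) (hWpos n) (hmarg n) hK₁.le (hsupp n) (hlogZint n)
      (hs n).1.le (abs_le.mpr ⟨by linarith [ha.1], ha.2⟩)
  have hε : Tendsto ε atTop (𝓝 0) := by
    simpa using (((continuous_sqrt.tendsto 0).comp hs0).const_mul _).add (hs0.const_mul _)
  refine ⟨fun δ hδ => ?_, squeeze_zero (fun _ => abs_nonneg _) (fun n => ?_) hε⟩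
  · obtain ⟨N, hN⟩ := eventually_atTop.mp (hε.eventually_lt_const hδ)
    exact ⟨N, fun n hn a ha => (hbound n a ha).trans_lt (hN n hn)⟩
  · have h := abs_sub_intervalIntegral_le one_le_two (measurable_FEpert (hWmeas n) (s n))
      fun a ha => hbound n a ⟨by linarith [ha.1], by linarith [ha.2]⟩
    rwa [show (2 : ℝ) - 1 = 1 by norm_num, one_mul, one_mul] at h

/-- **Vanishing effect of the perturbation on the free energy.**  If `sₙ → 0` then
`|F_n − F_n^{(pert)}(a)| → 0` uniformly in `a ∈ [1/2,3]`, and consequently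
`|F_n − ∫₁² F_n^{(pert)}(a) da| → 0`. -/
theorem perturbed_free_energy_vanishes
    {𝒴 : ℕ → Type*} [∀ n, MeasurableSpace (𝒴 n)]
    (K₁ : ℝ) (hK₁ : 0 < K₁)
    (P₁ : ∀ n, Measure (Fin n → ℝ)) [∀ n, IsProbabilityMeasure (P₁ n)]
    (ν : ∀ n, Measure ((Fin n → ℝ) × 𝒴 n)) [∀ n, IsProbabilityMeasure (ν n)]
    (W : ∀ n, (Fin n → ℝ) → 𝒴 n → ℝ)
    (hWmeas : ∀ n, Measurable fun p : (Fin n → ℝ) × 𝒴 n => W n p.1 p.2)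
    (hWpos : ∀ n x y, 0 ≤ W n x y)
    (hmarg : ∀ n, (ν n).map Prod.fst = P₁ n)
    (hsupp : ∀ n, ∀ᵐ x ∂(P₁ n), ∀ i, |x i| ≤ K₁)
    (hZint : ∀ n, Integrable (fun y => ∫ x, W n x y ∂(P₁ n)) ((ν n).map Prod.snd))
    (hlogZint : ∀ n,
      Integrable (fun y => Real.log (∫ x, W n x y ∂(P₁ n))) ((ν n).map Prod.snd))
    (hcond : ∀ n (f : (Fin n → ℝ) × 𝒴 n → ℝ), Measurable f → (∃ C : ℝ, ∀ p, |f p| ≤ C) →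
      ∫ p, f p ∂(ν n)
        = ∫ y, (∫ x, f (x, y) * W n x y ∂(P₁ n)) / (∫ x, W n x y ∂(P₁ n))
            ∂((ν n).map Prod.snd))
    (s : ℕ → ℝ) (hs : ∀ n, s n ∈ Set.Ioc (0 : ℝ) 1)
    (hs0 : Tendsto s atTop (𝓝 0)) :
    (∀ ε > (0 : ℝ), ∃ N : ℕ, ∀ n ≥ N, ∀ a ∈ Set.Icc (1 / 2 : ℝ) 3,
        |FEgen n (P₁ n) (W n) (ν n) - FEpert n (P₁ n) (W n) (ν n) (s n) a| < ε)
    ∧ Tendsto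
        (fun n => |FEgen n (P₁ n) (W n) (ν n)
          - ∫ a in (1 : ℝ)..2, FEpert n (P₁ n) (W n) (ν n) (s n) a|)
        atTop (𝓝 0) :=
  perturbed_free_energy_vanishes_general K₁ hK₁ P₁ ν W hWmeas hWpos hmarg hsupp hlogZint s hs hs0
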